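/- Let 0 < ν < 1/4 and c₀ ≥ 0, and let g : ℝ → [0, ∞) be measurable with ∫_ℝ g(τ)² dτ < ∞ and with |τ|·g(τ)² ≤ c₀·g(τ) for almost every τ ∈ ℝ. Then ∫_ℝ |τ|^{2ν} g(τ)² dτ < ∞. -/

import Mathlib

/-!
Off `[-1, 1]` the pointwise bound gives, with `A = |τ|^(2ν-1)`,
`|τ|^(2ν) g² = A · |τ| g² ≤ c₀ A g ≤ (g² + c₀² A²) / 2`, and `A² = |τ|^(4ν-2)` is integrable
at infinity because `4ν - 2 < -1`; on `[-1, 1]` the weight `|τ|^(2ν)` is at most `1`.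
So `|τ|^(2ν) g²` is dominated by `3/2 · g²` plus a multiple of an integrable function.
-/

open MeasureTheory Set
open scoped ENNReal

theorem integrableOn_abs_rpow_one_lt_abs {a : ℝ} (ha : a < -1) :
    IntegrableOn (fun t : ℝ => |t| ^ a) {t | 1 < |t|} := by
  have hIoi : IntegrableOn (fun t : ℝ => |t| ^ a) (Ioi 1) :=
    (integrableOn_Ioi_rpow_of_lt ha one_pos).congr_fun
      (fun t ht => by rw [abs_of_pos (one_pos.trans ht)]) measurableSet_Ioi
  have hIio : IntegrableOn (fun t : ℝ => |t| ^ a) (Neg.neg ⁻¹' Ioi 1) := by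
    simpa [Function.comp_def] using
      ((Measure.measurePreserving_neg volume).integrableOn_comp_preimage
        (Homeomorph.neg ℝ).measurableEmbedding).2 hIoi
  have hset : {t : ℝ | 1 < |t|} = Neg.neg ⁻¹' Ioi 1 ∪ Ioi 1 := by
    ext t; simp only [mem_ofPred_eq, lt_abs, mem_union, mem_preimage, mem_Ioi]; tauto
  rw [hset]
  exact hIio.union hIoi

theorem abs_rpow_mul_sq_le {ν c x y : ℝ} (hν : 0 ≤ ν) (h : |x| * y ^ 2 ≤ c * y) :
    |x| ^ (2 * ν) * y ^ 2 ≤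
      3 / 2 * y ^ 2 + c ^ 2 / 2 * {t : ℝ | 1 < |t|}.indicator (fun t => |t| ^ (4 * ν - 2)) x := by
  by_cases hx : |x| ≤ 1
  · have : |x| ^ (2 * ν) ≤ 1 := Real.rpow_le_one (abs_nonneg x) hx (by linarith)
    have : 0 ≤ {t : ℝ | 1 < |t|}.indicator (fun t => |t| ^ (4 * ν - 2)) x :=
      indicator_nonneg (fun t _ => by positivity) x
    nlinarith [sq_nonneg y, sq_nonneg c]
  · rw [not_le] at hx
    rw [indicator_of_mem (show x ∈ {t : ℝ | 1 < |t|} from hx)]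
    have hpos : 0 < |x| := one_pos.trans hx
    set A := |x| ^ (2 * ν - 1)
    have hA : 0 ≤ A := by positivity
    have e1 : |x| ^ (2 * ν) = A * |x| := by
      rw [← Real.rpow_add_one hpos.ne']; norm_num
    have e2 : |x| ^ (4 * ν - 2) = A ^ 2 := by
      rw [← Real.rpow_natCast, ← Real.rpow_mul hpos.le]; congr 1; push_cast; ring
    have := mul_le_mul_of_nonneg_left h hA
    rw [e1, e2]
    nlinarith [sq_nonneg (c * A - y), sq_nonneg y]

theorem stmt_5_general (ν : ℝ) (hν₀ : 0 < ν) (hν₁ : ν < 1 / 4)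
    (c₀ : ℝ) (g : ℝ → ℝ)
    (hgL2 : (∫⁻ τ : ℝ, ENNReal.ofReal (g τ ^ 2)) < ⊤)
    (hgptwise : ∀ᵐ τ : ℝ, |τ| * g τ ^ 2 ≤ c₀ * g τ) :
    (∫⁻ τ : ℝ, ENNReal.ofReal (|τ| ^ (2 * ν) * g τ ^ 2)) < ⊤ := by
  set H := {t : ℝ | 1 < |t|}.indicator (fun t => |t| ^ (4 * ν - 2))
  have hH : Integrable H :=
    (integrable_indicator_iff (measurableSet_lt measurable_const continuous_abs.measurable)).2
      (integrableOn_abs_rpow_one_lt_abs (by linarith))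
  calc (∫⁻ τ, ENNReal.ofReal (|τ| ^ (2 * ν) * g τ ^ 2))
      ≤ ∫⁻ τ, ENNReal.ofReal (3 / 2) * ENNReal.ofReal (g τ ^ 2)
          + ENNReal.ofReal (c₀ ^ 2 / 2) * ENNReal.ofReal (H τ) := by
        refine lintegral_mono_ae (hgptwise.mono fun τ hτ => ?_)
        rw [← ENNReal.ofReal_mul (by norm_num), ← ENNReal.ofReal_mul (by positivity)]
        exact (ENNReal.ofReal_le_ofReal (abs_rpow_mul_sq_le hν₀.le hτ)).trans ENNReal.ofReal_add_le
    _ = ENNReal.ofReal (3 / 2) * (∫⁻ τ, ENNReal.ofReal (g τ ^ 2))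
          + ENNReal.ofReal (c₀ ^ 2 / 2) * ∫⁻ τ, ENNReal.ofReal (H τ) := by
        rw [lintegral_add_right' _ (by fun_prop), lintegral_const_mul' _ _ ENNReal.ofReal_ne_top,
          lintegral_const_mul' _ _ ENNReal.ofReal_ne_top]
    _ < ⊤ := by
        have := hH.lintegral_lt_top
        finiteness

/-- The key quantitative step (3.22)–(3.29) in the proof of Lemma 3.2: if `g ≥ 0`
is square integrable and satisfies `|τ| g(τ)² ≤ c₀ g(τ)` almost everywhere, then
the weighted integral `∫ |τ|^{2ν} g(τ)² dτ` is finite for `0 < ν < 1/4`. -/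
theorem stmt_5 (ν : ℝ) (hν₀ : 0 < ν) (hν₁ : ν < 1 / 4)
    (c₀ : ℝ) (hc₀ : 0 ≤ c₀)
    (g : ℝ → ℝ) (hgmeas : Measurable g) (hgnonneg : ∀ τ, 0 ≤ g τ)
    (hgL2 : (∫⁻ τ : ℝ, ENNReal.ofReal (g τ ^ 2)) < ⊤)
    (hgptwise : ∀ᵐ τ : ℝ, |τ| * g τ ^ 2 ≤ c₀ * g τ) :
    (∫⁻ τ : ℝ, ENNReal.ofReal (|τ| ^ (2 * ν) * g τ ^ 2)) < ⊤ :=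
  stmt_5_general ν hν₀ hν₁ c₀ g hgL2 hgptwise
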